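/- There exists a finite simple graph G and an edge (a,b) of G with E_{S_{a,b}↔{a,b}} ≠ ∅ such that φ_G((a,b)) < min{φ_G(e') : e' ∈ E_{S_{a,b}↔{a,b}}}; that is, the minimum truss number of the edges joining common neighbors of a and b to a or b is not a lower bound for the truss number of (a,b). -/

import Mathlib

/-!
A truss containing the edge `ab` uses only common neighbours of `a` and `b` as third vertices
of its triangles, so `φ(ab) ≤ |S_{a,b}| + 2`; conversely every edge of an `m`-clique lies in an
`m`-truss, the clique itself. Glue two copies of `K₄` at a vertex `c` and join a vertex `a ≠ c`
of the first to a vertex `b ≠ c` of the second: then `S_{a,b} = {c}`, so `φ(ab) ≤ 3`, while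
`ac` and `bc` lie in copies of `K₄` and have truss number at least `4`.
-/

open SimpleGraph

variable {V : Type*}

/-- `H` is a `k`-truss of `G`: a connected subgraph with at least one edge in which
every edge lies in at least `k - 2` triangles of `H` (i.e. the endpoints of every edge
have at least `k - 2` common neighbors in `H`). -/
def IsTruss (G : SimpleGraph V) (k : ℕ) (H : G.Subgraph) : Prop :=
  H.Connected ∧ H.edgeSet.Nonempty ∧
    ∀ a b : V, H.Adj a b → k - 2 ≤ {c : V | H.Adj a c ∧ H.Adj b c}.ncard

/-- The truss number `φ_G(e)` of an edge `e`: the largest `k` such that `e` lies in some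
`k`-truss of `G`. -/
noncomputable def trussNumber (G : SimpleGraph V) (e : Sym2 V) : ℕ :=
  sSup {k : ℕ | ∃ H : G.Subgraph, IsTruss G k H ∧ e ∈ H.edgeSet}

/-- The support of the edge `(a, b)` in a subgraph `H`: the number of triangles of `H`
containing it, i.e. the number of common neighbors of `a` and `b` in `H`. -/
noncomputable def suppIn {G : SimpleGraph V} (H : G.Subgraph) (a b : V) : ℕ :=
  {c : V | H.Adj a c ∧ H.Adj b c}.ncard

/-- The support of the edge `(a, b)` in `G`. -/
noncomputable def suppG (G : SimpleGraph V) (a b : V) : ℕ :=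
  {c : V | G.Adj a c ∧ G.Adj b c}.ncard

/-- `S_{a,b}`: the common neighbors of `a` and `b` in `G`. -/
def commonNbrs (G : SimpleGraph V) (a b : V) : Set V :=
  {c : V | G.Adj a c ∧ G.Adj b c}

/-- `E_{S_{a,b} ↔ {a,b}}`: the edges of `G` joining a common neighbor of `a` and `b`
to `a` or to `b`. -/
def sideEdges (G : SimpleGraph V) (a b : V) : Set (Sym2 V) :=
  {e | ∃ c, G.Adj a c ∧ G.Adj b c ∧ (e = s(a, c) ∨ e = s(b, c))}

/-- `k_min((a,b))`: minimum truss number among the edges of `E_{S_{a,b} ↔ {a,b}}`. -/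
noncomputable def kmin (G : SimpleGraph V) (a b : V) : ℕ :=
  sInf (trussNumber G '' sideEdges G a b)

/-- `k_max((a,b))`: maximum truss number among the edges of `E_{S_{a,b} ↔ {a,b}}`. -/
noncomputable def kmax (G : SimpleGraph V) (a b : V) : ℕ :=
  sSup (trussNumber G '' sideEdges G a b)

/-- `G + (a,b)`: the graph obtained from `G` by inserting the edge `(a, b)`. -/
def insertEdge (G : SimpleGraph V) (a b : V) : SimpleGraph V :=
  G ⊔ fromEdgeSet {s(a, b)}

section Truss

variable {G : SimpleGraph V}

lemma IsTruss.le_ncard_commonNbrs_add_two [Finite V] {k : ℕ} {H : G.Subgraph}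
    (hH : IsTruss G k H) {a b : V} (hab : H.Adj a b) :
    k ≤ (commonNbrs G a b).ncard + 2 := by
  have hsub : {c : V | H.Adj a c ∧ H.Adj b c} ⊆ commonNbrs G a b :=
    fun c hc => ⟨H.adj_sub hc.1, H.adj_sub hc.2⟩
  have := (hH.2.2 a b hab).trans (Set.ncard_le_ncard hsub)
  omega

lemma trussNumber_le_ncard_commonNbrs_add_two [Finite V] (a b : V) :
    trussNumber G s(a, b) ≤ (commonNbrs G a b).ncard + 2 :=
  csSup_le' fun _ ⟨_, hH, hab⟩ => hH.le_ncard_commonNbrs_add_two hab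

lemma le_trussNumber [Finite V] {k : ℕ} {H : G.Subgraph} (hH : IsTruss G k H) {e : Sym2 V}
    (he : e ∈ H.edgeSet) : k ≤ trussNumber G e := by
  induction e using Sym2.ind with
  | h a b =>
    refine le_csSup ⟨(commonNbrs G a b).ncard + 2, ?_⟩ ⟨H, hH, he⟩
    rintro _ ⟨H', hH', hab⟩
    exact hH'.le_ncard_commonNbrs_add_two hab

lemma isTruss_induce_of_isClique {s : Finset V} (hs : G.IsClique (s : Set V))
    (hcard : 2 ≤ s.card) : IsTruss G s.card ((⊤ : G.Subgraph).induce s) := by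
  classical
  obtain ⟨u, hu, v, hv, huv⟩ := Finset.one_lt_card.mp hcard
  refine ⟨?_, ⟨s(u, v), hu, hv, hs hu hv huv⟩, ?_⟩
  · refine Subgraph.connected_iff.mpr ⟨⟨?_⟩, ⟨u, hu⟩⟩
    rintro ⟨x, hx⟩ ⟨y, hy⟩
    obtain rfl | hxy := eq_or_ne x y
    · rfl
    · exact Adj.reachable
        (show ((⊤ : G.Subgraph).induce s).Adj x y from ⟨hx, hy, hs hx hy hxy⟩)
  · rintro a b ⟨ha, hb, hab⟩
    have hcommon : {c : V | ((⊤ : G.Subgraph).induce s).Adj a c ∧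
        ((⊤ : G.Subgraph).induce s).Adj b c} = ↑(s \ {a, b}) := by
      ext c
      simp only [Subgraph.induce_adj, Subgraph.top_adj, Set.mem_ofPred_eq, Finset.coe_sdiff,
        Set.mem_sdiff, Finset.mem_coe, Finset.coe_insert, Finset.coe_singleton,
        Set.mem_insert_iff, Set.mem_singleton_iff, not_or]
      constructor
      · rintro ⟨⟨-, hc, hac⟩, -, -, hbc⟩
        exact ⟨hc, hac.ne', hbc.ne'⟩
      · rintro ⟨hc, hca, hcb⟩
        exact ⟨⟨ha, hc, hs ha hc (Ne.symm hca)⟩, hb, hc, hs hb hc (Ne.symm hcb)⟩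
    have hab_sub : {a, b} ⊆ s :=
      Finset.insert_subset_iff.mpr ⟨ha, Finset.singleton_subset_iff.mpr hb⟩
    rw [hcommon, Set.ncard_coe_finset, Finset.card_sdiff_of_subset hab_sub, Finset.card_pair hab.ne]

lemma card_le_trussNumber_of_isClique [Finite V] {s : Finset V} (hs : G.IsClique (s : Set V))
    {a b : V} (ha : a ∈ s) (hb : b ∈ s) (hab : a ≠ b) : s.card ≤ trussNumber G s(a, b) :=
  le_trussNumber (isTruss_induce_of_isClique hs (Finset.one_lt_card.mpr ⟨a, ha, b, hb, hab⟩))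
    ⟨ha, hb, hs ha hb hab⟩

lemma le_kmin {a b : V} {k : ℕ} (hne : (sideEdges G a b).Nonempty)
    (hk : ∀ e ∈ sideEdges G a b, k ≤ trussNumber G e) : k ≤ kmin G a b :=
  le_csInf (hne.image _) (Set.forall_mem_image.mpr hk)

lemma sideEdges_eq_pair_of_commonNbrs_eq_singleton {a b c : V}
    (hS : commonNbrs G a b = {c}) : sideEdges G a b = {s(a, c), s(b, c)} := by
  ext e
  have hc : ∀ x, G.Adj a x ∧ G.Adj b x ↔ x = c := fun x => Set.ext_iff.mp hS x
  constructor
  · rintro ⟨x, hax, hbx, he⟩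
    obtain rfl := (hc x).mp ⟨hax, hbx⟩
    exact he
  · intro he
    exact ⟨c, ((hc c).mpr rfl).1, ((hc c).mpr rfl).2, he⟩

end Truss

def bridgedK4Pair : SimpleGraph (Fin 7) :=
  SimpleGraph.fromRel fun i j => {i, j} ⊆ ({0, 2, 3, 4} : Finset (Fin 7)) ∨
    {i, j} ⊆ ({1, 2, 5, 6} : Finset (Fin 7)) ∨ (i = 0 ∧ j = 1)

instance : DecidableRel bridgedK4Pair.Adj := fun i j => by unfold bridgedK4Pair; infer_instance

lemma bridgedK4Pair_commonNbrs : commonNbrs bridgedK4Pair 0 1 = {2} := by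
  ext c
  exact (show ∀ c : Fin 7, bridgedK4Pair.Adj 0 c ∧ bridgedK4Pair.Adj 1 c ↔ c = 2 by decide) c

lemma bridgedK4Pair_isClique_left :
    bridgedK4Pair.IsClique (({0, 2, 3, 4} : Finset (Fin 7)) : Set (Fin 7)) := by
  decide

lemma bridgedK4Pair_isClique_right :
    bridgedK4Pair.IsClique (({1, 2, 5, 6} : Finset (Fin 7)) : Set (Fin 7)) := by
  decide

theorem stmt11 : ∃ (n : ℕ) (G : SimpleGraph (Fin n)) (a b : Fin n),
    G.Adj a b ∧ (sideEdges G a b).Nonempty ∧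
    trussNumber G s(a, b) < kmin G a b := by
  have hside := sideEdges_eq_pair_of_commonNbrs_eq_singleton bridgedK4Pair_commonNbrs
  refine ⟨7, bridgedK4Pair, 0, 1, by decide, by simp [hside], ?_⟩
  calc trussNumber bridgedK4Pair s(0, 1)
      ≤ (commonNbrs bridgedK4Pair 0 1).ncard + 2 := trussNumber_le_ncard_commonNbrs_add_two 0 1
    _ = 3 := by rw [bridgedK4Pair_commonNbrs, Set.ncard_singleton]
    _ < 4 := by norm_num
    _ ≤ kmin bridgedK4Pair 0 1 := by
      refine le_kmin (by simp [hside]) ?_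
      rw [hside]
      rintro e (rfl | rfl)
      · exact card_le_trussNumber_of_isClique bridgedK4Pair_isClique_left (by decide)
          (by decide) (by decide)
      · exact card_le_trussNumber_of_isClique bridgedK4Pair_isClique_right (by decide)
          (by decide) (by decide)
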